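/- Suppose x, x_S : [s₀,∞) → ℝ^{n+1} with |⟨x(s) - x_S, ν(s)⟩| ≤ C₁ e^{-(2/n)s}, |x(s) - x_S| ≤ C₂ e^{-γ s} for some 0 < γ < 2/n, and |ν(s) - ν_S| ≤ C₃ e^{-γ s}, where ν_S is a fixed unit vector and x(s) - x_S = |x(s) - x_S| ν_S for all large s. Then |x(s) - x_S| ≤ C e^{-min(2γ, 2/n) s} for some constant C. Consequently, if γ is the supremum of exponential decay rates of |x - x_S|, then γ ≥ 2/n. -/

import Mathlib

/-!
Since `x - x_S` is eventually the nonnegative multiple `|x - x_S| ν_S` of the unit vector `ν_S`,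
`|x - x_S| = ⟨x - x_S, ν_S⟩ = ⟨x - x_S, ν_S - ν⟩ + ⟨x - x_S, ν⟩`. The first term is a product of
two factors decaying at rate `γ`, hence decays at rate `2γ`; the second decays at rate `2/n`.
So `|x - x_S|` decays at rate `min(2γ, 2/n) > γ`, and `γ` cannot be the supremum of its decay
rates.
-/

open scoped RealInnerProductSpace

def ExpDecay (f : ℝ → ℝ) (s₀ δ : ℝ) : Prop :=
  ∃ C : ℝ, ∀ s : ℝ, s₀ ≤ s → f s ≤ C * Real.exp (-δ * s)

namespace ExpDecay

variable {f g : ℝ → ℝ} {s₀ s₁ α β : ℝ}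

theorem mono_start (hf : ExpDecay f s₀ α) (h : s₀ ≤ s₁) : ExpDecay f s₁ α :=
  let ⟨C, hC⟩ := hf
  ⟨C, fun s hs => hC s (h.trans hs)⟩

theorem of_le (hg : ExpDecay g s₀ α) (h : ∀ s, s₀ ≤ s → f s ≤ g s) : ExpDecay f s₀ α :=
  let ⟨C, hC⟩ := hg
  ⟨C, fun s hs => (h s hs).trans (hC s hs)⟩

theorem exists_nonneg (hf : ExpDecay f s₀ α) :
    ∃ C, 0 ≤ C ∧ ∀ s, s₀ ≤ s → f s ≤ C * Real.exp (-α * s) :=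
  let ⟨C, hC⟩ := hf
  ⟨max C 0, le_max_right _ _, fun s hs =>
    (hC s hs).trans (mul_le_mul_of_nonneg_right (le_max_left _ _) (Real.exp_pos _).le)⟩

theorem mono (hf : ExpDecay f s₀ α) (h : β ≤ α) : ExpDecay f s₀ β := by
  obtain ⟨C, hC0, hC⟩ := hf.exists_nonneg
  refine ⟨C * Real.exp ((β - α) * s₀), fun s hs => (hC s hs).trans ?_⟩
  rw [mul_assoc, ← Real.exp_add]
  gcongr
  nlinarith [mul_nonneg (sub_nonneg.mpr h) (sub_nonneg.mpr hs)]

theorem add (hf : ExpDecay f s₀ α) (hg : ExpDecay g s₀ α) : ExpDecay (f + g) s₀ α :=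
  let ⟨C, hC⟩ := hf
  let ⟨D, hD⟩ := hg
  ⟨C + D, fun s hs => by simpa only [Pi.add_apply, add_mul] using add_le_add (hC s hs) (hD s hs)⟩

theorem mul (hf : ExpDecay f s₀ α) (hg : ExpDecay g s₀ β) (hf0 : ∀ s, 0 ≤ f s)
    (hg0 : ∀ s, 0 ≤ g s) : ExpDecay (f * g) s₀ (α + β) := by
  obtain ⟨C, hC⟩ := hf
  obtain ⟨D, hD⟩ := hg
  refine ⟨C * D, fun s hs => ?_⟩
  calc f s * g s ≤ C * Real.exp (-α * s) * (D * Real.exp (-β * s)) :=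
        mul_le_mul (hC s hs) (hD s hs) (hg0 s) ((hf0 s).trans (hC s hs))
    _ = C * D * Real.exp (-(α + β) * s) := by
        rw [neg_add, add_mul, Real.exp_add]; ring

theorem of_tail (htail : ExpDecay f s₁ β) (hf : ExpDecay f s₀ α) (h : α ≤ β) :
    ExpDecay f s₀ β := by
  obtain ⟨C, hC⟩ := htail
  obtain ⟨D, hD0, hD⟩ := hf.exists_nonneg
  refine ⟨max C (D * Real.exp ((β - α) * s₁)), fun s hs => ?_⟩
  rcases le_or_gt s₁ s with hs₁ | hs₁
  · exact (hC s hs₁).trans (by gcongr; exact le_max_left _ _)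
  · calc f s ≤ D * Real.exp (-α * s) := hD s hs
      _ ≤ D * Real.exp ((β - α) * s₁) * Real.exp (-β * s) := by
          rw [mul_assoc, ← Real.exp_add]
          gcongr
          nlinarith [mul_nonneg (sub_nonneg.mpr h) (sub_nonneg.mpr hs₁.le)]
      _ ≤ _ := by gcongr; exact le_max_right _ _

end ExpDecay

theorem ne_sSup_of_lt_mem {S : Set ℝ} {γ a : ℝ} (hγ : 0 < γ) (ha : a ∈ S) (hγa : γ < a) :
    γ ≠ sSup S := by
  by_cases hS : BddAbove S
  · exact (hγa.trans_le (le_csSup hS ha)).ne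
  · rw [Real.sSup_of_not_bddAbove hS]
    exact hγ.ne'

theorem norm_le_norm_mul_norm_sub_add_abs_inner {E : Type*} [NormedAddCommGroup E]
    [InnerProductSpace ℝ E] {v u : E} (hu : ‖u‖ = 1) (hv : v = ‖v‖ • u) (w : E) :
    ‖v‖ ≤ ‖v‖ * ‖w - u‖ + |⟪v, w⟫| :=
  calc ‖v‖ = ⟪v, u⟫ := by
        conv_rhs => rw [hv]
        rw [real_inner_smul_left, real_inner_self_eq_norm_sq, hu, one_pow, mul_one]
    _ = ⟪v, u - w⟫ + ⟪v, w⟫ := by rw [← inner_add_right, sub_add_cancel]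
    _ ≤ ‖v‖ * ‖w - u‖ + |⟪v, w⟫| := by
        rw [← norm_neg (w - u), neg_sub]
        exact add_le_add (real_inner_le_norm _ _) (le_abs_self _)

theorem bootstrap_rate_of_convergence_general (n : ℕ)
    (s₀ γ C₁ C₂ C₃ : ℝ) (hγ : 0 < γ) (hγn : γ < 2 / (n : ℝ))
    (x ν : ℝ → EuclideanSpace ℝ (Fin (n + 1)))
    (xS νS : EuclideanSpace ℝ (Fin (n + 1))) (hνS : ‖νS‖ = 1)
    (h1 : ∀ s : ℝ, s₀ ≤ s → |⟪x s - xS, ν s⟫| ≤ C₁ * Real.exp (-(2 / (n : ℝ)) * s))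
    (h2 : ∀ s : ℝ, s₀ ≤ s → ‖x s - xS‖ ≤ C₂ * Real.exp (-γ * s))
    (h3 : ∀ s : ℝ, s₀ ≤ s → ‖ν s - νS‖ ≤ C₃ * Real.exp (-γ * s))
    (hradial : ∃ s₁ : ℝ, ∀ s : ℝ, s₁ ≤ s → x s - xS = ‖x s - xS‖ • νS) :
    (∃ C : ℝ, ∀ s : ℝ, s₀ ≤ s →
      ‖x s - xS‖ ≤ C * Real.exp (-(min (2 * γ) (2 / (n : ℝ))) * s)) ∧
    (γ = sSup {δ : ℝ | ∃ C : ℝ, ∀ s : ℝ, s₀ ≤ s → ‖x s - xS‖ ≤ C * Real.exp (-δ * s)} →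
      2 / (n : ℝ) ≤ γ) := by
  obtain ⟨s₁, hrad⟩ := hradial
  set m := min (2 * γ) (2 / (n : ℝ))
  have hγm : γ < m := lt_min (by linarith) hγn
  have hdist : ExpDecay (fun s => ‖x s - xS‖) s₀ γ := ⟨C₂, h2⟩
  have hnormal : ExpDecay (fun s => ‖ν s - νS‖) s₀ γ := ⟨C₃, h3⟩
  have hinner : ExpDecay (fun s => |⟪x s - xS, ν s⟫|) s₀ (2 / n) := ⟨C₁, h1⟩
  have hbound : ExpDecay ((fun s => ‖x s - xS‖) * (fun s => ‖ν s - νS‖)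
      + fun s => |⟪x s - xS, ν s⟫|) s₀ m :=
    ((hdist.mul hnormal (fun _ => norm_nonneg _) (fun _ => norm_nonneg _)).mono
      (by rw [← two_mul]; exact min_le_left _ _)).add (hinner.mono (min_le_right _ _))
  have htail : ExpDecay (fun s => ‖x s - xS‖) (max s₁ s₀) m :=
    (hbound.mono_start (le_max_right s₁ s₀)).of_le fun s hs =>
      norm_le_norm_mul_norm_sub_add_abs_inner hνS (hrad s ((le_max_left _ _).trans hs)) (ν s)
  have hdecay : ExpDecay (fun s => ‖x s - xS‖) s₀ m := htail.of_tail hdist hγm.le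
  exact ⟨hdecay, fun hsup => absurd hsup (ne_sSup_of_lt_mem hγ hdecay hγm)⟩

/-- Bootstrap argument for the rate of convergence: if the normal component of
`x - x_S` decays at rate `2/n`, `x - x_S` and `ν - ν_S` decay at rate `γ < 2/n`, and
`x - x_S` is eventually radial, then `x - x_S` decays at rate `min(2γ, 2/n)`;
consequently the supremum of decay rates of `x - x_S` is at least `2/n`. -/
theorem bootstrap_rate_of_convergence (n : ℕ) (hn : 1 ≤ n)
    (s₀ γ C₁ C₂ C₃ : ℝ) (hγ : 0 < γ) (hγn : γ < 2 / (n : ℝ))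
    (x ν : ℝ → EuclideanSpace ℝ (Fin (n + 1)))
    (xS νS : EuclideanSpace ℝ (Fin (n + 1))) (hνS : ‖νS‖ = 1)
    (h1 : ∀ s : ℝ, s₀ ≤ s → |⟪x s - xS, ν s⟫| ≤ C₁ * Real.exp (-(2 / (n : ℝ)) * s))
    (h2 : ∀ s : ℝ, s₀ ≤ s → ‖x s - xS‖ ≤ C₂ * Real.exp (-γ * s))
    (h3 : ∀ s : ℝ, s₀ ≤ s → ‖ν s - νS‖ ≤ C₃ * Real.exp (-γ * s))
    (hradial : ∃ s₁ : ℝ, ∀ s : ℝ, s₁ ≤ s → x s - xS = ‖x s - xS‖ • νS) :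
    (∃ C : ℝ, ∀ s : ℝ, s₀ ≤ s →
      ‖x s - xS‖ ≤ C * Real.exp (-(min (2 * γ) (2 / (n : ℝ))) * s)) ∧
    (γ = sSup {δ : ℝ | ∃ C : ℝ, ∀ s : ℝ, s₀ ≤ s → ‖x s - xS‖ ≤ C * Real.exp (-δ * s)} →
      2 / (n : ℝ) ≤ γ) :=
  bootstrap_rate_of_convergence_general n s₀ γ C₁ C₂ C₃ hγ hγn x ν xS νS hνS h1 h2 h3 hradial
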